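/- Let M = K(a,b,c,d) be a 4×4 K3 Markov matrix, and set x = a+b−c−d, y = a−b+c−d, z = a−b−c+d. If there exists a real matrix Q with K3 form such that exp(Q) = M, then x > 0, y > 0 and z > 0, and necessarily Q = S · diag(0, log x, log y, log z) · S⁻¹ (the principal logarithm of M); in particular such a real K3 logarithm is unique. -/

import Mathlib

/-!
Every K3 matrix is diagonalised by the Hadamard matrix `S`, with eigenvalue vector
`kimuraEigenvalues`. Conjugation by `S` commutes with `exp`, so `exp (K α β γ δ) = K a b c d`
becomes `exp λᵢ = μᵢ` on their eigenvalues `λᵢ` and `μᵢ`: each `μᵢ` is positive and `λᵢ = log μᵢ`. The eigenvalue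
on the all-ones column is the row sum `1` of the Markov matrix, whose logarithm is `0`.
-/

def K {α : Type*} (a b c d : α) : Matrix (Fin 4) (Fin 4) α :=
  !![a, b, c, d;
     b, a, d, c;
     c, d, a, b;
     d, c, b, a]

def S : Matrix (Fin 4) (Fin 4) ℝ :=
  !![1,  1,  1,  1;
     1,  1, -1, -1;
     1, -1,  1, -1;
     1, -1, -1,  1]

def IsMarkov {k : ℕ} (M : Matrix (Fin k) (Fin k) ℝ) : Prop :=
  (∀ i j, 0 ≤ M i j) ∧ ∀ i, ∑ j, M i j = 1

open Matrix

def kimuraEigenvalues (p q r s : ℝ) : Fin 4 → ℝ :=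
  ![p + q + r + s, p + q - r - s, p - q + r - s, p - q - r + s]

lemma S_mul_smul_S : S * ((1 / 4 : ℝ) • S) = 1 := by
  ext i j
  fin_cases i <;> fin_cases j <;> norm_num [S, mul_apply, Fin.sum_univ_succ, one_apply]

lemma inv_S : S⁻¹ = (1 / 4 : ℝ) • S :=
  inv_eq_right_inv S_mul_smul_S

lemma isUnit_S : IsUnit S :=
  IsUnit.of_mul_eq_one _ S_mul_smul_S

lemma K_eq_S_mul_diagonal_mul_inv_S (p q r s : ℝ) :
    K p q r s = S * diagonal (kimuraEigenvalues p q r s) * S⁻¹ := by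
  rw [inv_S]
  ext i j
  fin_cases i <;> fin_cases j <;>
    simp [K, S, kimuraEigenvalues, mul_apply, vecMul_diagonal, Fin.sum_univ_succ] <;> ring

lemma exp_conj_diagonal_eq_conj_diagonal_iff {n : Type*} [Fintype n] [DecidableEq n]
    {P : Matrix n n ℝ} (hP : IsUnit P) (u v : n → ℝ) :
    NormedSpace.exp (P * diagonal u * P⁻¹) = P * diagonal v * P⁻¹ ↔ Real.exp ∘ u = v := by
  rw [exp_conj _ _ hP, exp_diagonal, (isUnit_nonsing_inv_iff.2 hP).mul_left_inj,
    hP.mul_right_inj, diagonal_injective.eq_iff, Pi.exp_def,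
    Real.exp_eq_exp_ℝ, Function.comp_def]

lemma IsMarkov.K_sum {a b c d : ℝ} (hM : IsMarkov (K a b c d)) : a + b + c + d = 1 := by
  simpa [K, Fin.sum_univ_four, add_assoc] using hM.2 0

theorem stmt_5 (a b c d : ℝ) (hM : IsMarkov (K a b c d))
    (Q : Matrix (Fin 4) (Fin 4) ℝ)
    (hK3 : ∃ α β γ δ : ℝ, Q = K α β γ δ)
    (hexp : NormedSpace.exp Q = K a b c d) :
    0 < a + b - c - d ∧ 0 < a - b + c - d ∧ 0 < a - b - c + d ∧
    Q = S * Matrix.diagonal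
        ![0, Real.log (a + b - c - d), Real.log (a - b + c - d), Real.log (a - b - c + d)]
      * S⁻¹ := by
  obtain ⟨α, β, γ, δ, rfl⟩ := hK3
  have hexp_eig : Real.exp ∘ kimuraEigenvalues α β γ δ = kimuraEigenvalues a b c d := by
    rw [← exp_conj_diagonal_eq_conj_diagonal_iff isUnit_S, ← K_eq_S_mul_diagonal_mul_inv_S,
      ← K_eq_S_mul_diagonal_mul_inv_S, hexp]
  have hpos (i : Fin 4) : 0 < kimuraEigenvalues a b c d i := hexp_eig ▸ Real.exp_pos _
  have hlog : kimuraEigenvalues α β γ δ = Real.log ∘ kimuraEigenvalues a b c d := by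
    rw [← hexp_eig]
    ext i
    exact (Real.log_exp _).symm
  have hlog_eig : Real.log ∘ kimuraEigenvalues a b c d =
      ![0, Real.log (a + b - c - d), Real.log (a - b + c - d), Real.log (a - b - c + d)] := by
    ext i
    fin_cases i <;> simp [kimuraEigenvalues, hM.K_sum]
  exact ⟨hpos 1, hpos 2, hpos 3, by rw [K_eq_S_mul_diagonal_mul_inv_S, hlog, hlog_eig]⟩
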